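/- arXiv:2512.20598 — 2 statements merged into one kernel-verified Lean document; each statement's English description precedes it below -/
import Mathlib

section
/- Let Σ = {s_0 < s_1 < ... < s_{σ-1}} be an ordered alphabet of size σ ≥ 1 and let K = s_{σ-1}^{k_{σ-1}} s_{σ-2}^{k_{σ-2}} ... s_1^{k_1} s_0^{k_0} be a clustered string, where every exponent satisfies k_i ≥ 2. Then the Burrows–Wheeler transform of the terminated string K$ has exactly σ + 1 runs. -/
/-! Since the clustered string `K` is non-increasing and `$` is smaller than every letter,
the rotation of `K$` starting at position `p + 1` is, letter by letter, at most the one starting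
at `p`, and strictly smaller where it reaches `$`. So sorting the rotations just reverses their
order, and `BWT(K$)` is `reverse K ++ [$] = s_0^{k_0} ⋯ s_{σ-1}^{k_{σ-1}} $`, whose runs are its
`σ` blocks and the sentinel. -/

/-- The Burrows–Wheeler transform of `w`: last characters of all cyclic
rotations of `w`, listed in lexicographic order of the rotations. -/
def bwtL {α : Type*} [LinearOrder α] (w : List α) : List α :=
  (List.insertionSort (· ≤ ·)
    ((List.range w.length).map (fun i => w.rotate i))).filterMap List.getLast?

/-- Number of runs (maximal equal-letter substrings) of a string. -/
def runsCount {α : Type*} [DecidableEq α] (l : List α) : ℕ :=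
  (l.destutter (· ≠ ·)).length

/-- Terminate a string with the sentinel `⊥ = $`, smaller than every symbol. -/
def term {α : Type*} (w : List α) : List (WithBot α) :=
  w.map (fun a => (a : WithBot α)) ++ [⊥]

/-- `y` is a right-extension of `v`: `y = x ++ [a]` occurs in `v` where `x`
is right-maximal (some `x ++ [b]` with `b ≠ a` also occurs in `v`). -/
def RightExt {α : Type*} (v y : List α) : Prop :=
  ∃ x a b, y = x ++ [a] ∧ a ≠ b ∧ (x ++ [a]) <:+: v ∧ (x ++ [b]) <:+: v

/-- `y` is a super-maximal extension of `v`: a right-extension that is not a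
proper suffix of any other right-extension. -/
def SuperMax {α : Type*} (v y : List α) : Prop :=
  RightExt v y ∧ ∀ z, RightExt v z → y <:+ z → z = y

/-- Number of super-maximal extensions of `v`. -/
noncomputable def sre {α : Type*} (v : List α) : ℕ :=
  Set.ncard {y | SuperMax v y}

/-- χ(w): the size of a smallest suffixient set of `w$`, which equals the
number of super-maximal extensions of `w$`. -/
noncomputable def chi {α : Type*} (w : List α) : ℕ :=
  sre (term w)

/-- The clustered string `s_{σ-1}^{k_{σ-1}} ⋯ s_1^{k_1} s_0^{k_0}`. -/
def clustered {α : Type*} {σ : ℕ} (s : Fin σ → α) (k : Fin σ → ℕ) : List α :=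
  (List.finRange σ).reverse.flatMap (fun j => List.replicate (k j) (s j))

namespace List

variable {β : Type*}

lemma filterMap_getElem?_range (l : List β) :
    (range l.length).filterMap (l[·]?) = l := by
  have h : (range l.length).map (l[·]?) = l.map some := by
    apply ext_getElem <;> simp
  simpa [filterMap_map] using congrArg (filterMap id) h

lemma rotate_append_singleton (u : List β) (b : β) {p : ℕ} (hp : p ≤ u.length) :
    (u ++ [b]).rotate p = u.drop p ++ b :: u.take p := by
  rw [rotate_eq_drop_append_take (by simp; omega), drop_append_of_le_length hp,
    take_append_of_le_length hp]
  simp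

lemma getLast?_rotate_append_singleton (u : List β) (b : β) {p : ℕ} (hp : p ≤ u.length) :
    ((u ++ [b]).rotate p).getLast? = (b :: u)[p]? := by
  rw [rotate_append_singleton u b hp]
  cases p with
  | zero => simp
  | succ q => simp [getLast?_cons, getLast?_take, getElem?_eq_getElem hp]

section

variable [LinearOrder β]

lemma append_cons_lt_cons_append_cons {a b : β} (x y : List β) {l : List β}
    (hl : (a :: l).IsChain (· ≥ ·)) (hb : ∀ c ∈ a :: l, b < c) :
    l ++ b :: x < a :: (l ++ b :: y) := by
  induction l generalizing a with
  | nil => exact Lex.rel (hb a mem_cons_self)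
  | cons c l ih =>
    obtain ⟨hca, hcl⟩ := isChain_cons_cons.mp hl
    rcases hca.lt_or_eq with hlt | rfl
    · exact Lex.rel hlt
    · exact Lex.cons (ih hcl fun d hd => hb d (mem_cons_of_mem _ hd))

lemma rotate_succ_lt_rotate {u : List β} {b : β} (hu : u.Pairwise (· ≥ ·))
    (hb : ∀ a ∈ u, b < a) {p : ℕ} (hp : p < u.length) :
    (u ++ [b]).rotate (p + 1) < (u ++ [b]).rotate p := by
  have hdrop := drop_eq_getElem_cons hp
  rw [rotate_append_singleton u b hp, rotate_append_singleton u b hp.le, hdrop, cons_append]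
  refine append_cons_lt_cons_append_cons _ _ ?_ fun c hc => hb c ?_
  · rw [← hdrop]
    exact (hu.sublist (drop_sublist _ _)).isChain
  · rw [← hdrop] at hc
    exact mem_of_mem_drop hc

end

end List

theorem bwtL_append_singleton {β : Type*} [LinearOrder β] {u : List β} {b : β}
    (hu : u.Pairwise (· ≥ ·)) (hb : ∀ a ∈ u, b < a) :
    bwtL (u ++ [b]) = u.reverse ++ [b] := by
  set rot : ℕ → List β := fun i => (u ++ [b]).rotate i
  have hsorted : ((List.range (u.length + 1)).reverse.map rot).Pairwise (· ≤ ·) := by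
    refine List.isChain_iff_pairwise.mp ?_
    rw [List.isChain_map, List.isChain_reverse, List.isChain_range_succ]
    exact fun m hm => (List.rotate_succ_lt_rotate hu hb hm).le
  have hsort : List.insertionSort (· ≤ ·) ((List.range (u.length + 1)).map rot) =
      (List.range (u.length + 1)).reverse.map rot :=
    List.Perm.eq_of_pairwise' (List.pairwise_insertionSort _ _) hsorted
      ((List.perm_insertionSort _ _).trans ((List.reverse_perm _).map _).symm)
  have hlast : (List.range (u.length + 1)).filterMap (fun i => (rot i).getLast?) = b :: u := by
    rw [List.filterMap_congr fun i hi => List.getLast?_rotate_append_singleton u b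
      (Nat.lt_succ_iff.mp (List.mem_range.mp hi))]
    exact List.filterMap_getElem?_range (b :: u)
  rw [bwtL, List.length_append, List.length_singleton, hsort, List.filterMap_map,
    List.filterMap_reverse]
  simpa using congrArg List.reverse hlast

section Runs

variable {β : Type*} [DecidableEq β]

lemma destutter'_ne_replicate_append (a : β) (m : ℕ) (l : List β) :
    (List.replicate m a ++ l).destutter' (· ≠ ·) a = l.destutter' (· ≠ ·) a := by
  induction m with
  | zero => rfl
  | succ m ih =>
    rw [List.replicate_succ, List.cons_append, List.destutter'_cons_neg _ (not_not.mpr rfl), ih]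

lemma runsCount_replicate_append {a : β} {m : ℕ} (hm : 0 < m) {l : List β}
    (hl : l.head? ≠ some a) : runsCount (List.replicate m a ++ l) = runsCount l + 1 := by
  obtain ⟨m, rfl⟩ := Nat.exists_eq_add_one_of_ne_zero hm.ne'
  rw [runsCount, List.replicate_succ, List.cons_append, List.destutter_cons',
    destutter'_ne_replicate_append]
  cases l with
  | nil => rfl
  | cons x t =>
    have hax : a ≠ x := fun h => hl (by simp [h])
    rw [List.destutter'_cons_pos _ hax, List.length_cons, runsCount, List.destutter_cons']

lemma runsCount_flatMap_replicate_append_singleton {ι : Type*} (g : ι → β) (cnt : ι → ℕ)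
    (c : β) {js : List ι} (hcnt : ∀ j ∈ js, 0 < cnt j) (hg : js.IsChain (g · ≠ g ·))
    (hc : ∀ j ∈ js, g j ≠ c) :
    runsCount (js.flatMap (fun j => List.replicate (cnt j) (g j)) ++ [c]) = js.length + 1 := by
  induction js with
  | nil => rfl
  | cons j rest ih =>
    have hhead : (rest.flatMap (fun j => List.replicate (cnt j) (g j)) ++ [c]).head? ≠
        some (g j) := by
      cases rest with
      | nil => simpa [eq_comm] using hc j (by simp)
      | cons r rest =>
        obtain ⟨m, hm⟩ := Nat.exists_eq_add_one_of_ne_zero (hcnt r (by simp)).ne'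
        simpa [hm, List.replicate_succ, eq_comm] using (List.isChain_cons_cons.mp hg).1
    rw [List.flatMap_cons, List.append_assoc, runsCount_replicate_append (hcnt j (by simp)) hhead,
      ih (fun i hi => hcnt i (by simp [hi])) hg.tail (fun i hi => hc i (by simp [hi])),
      List.length_cons]

end Runs

lemma pairwise_ge_clustered {α : Type*} [Preorder α] {σ : ℕ} {s : Fin σ → α}
    (hs : Monotone s) (k : Fin σ → ℕ) : (clustered s k).Pairwise (· ≥ ·) := by
  rw [clustered, List.pairwise_flatMap, List.pairwise_reverse]
  refine ⟨fun j _ => List.pairwise_replicate.mpr (Or.inr le_rfl), ?_⟩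
  refine (List.pairwise_le_finRange σ).imp fun hij x hx y hy => ?_
  rw [List.eq_of_mem_replicate hx, List.eq_of_mem_replicate hy]
  exact hs hij

lemma reverse_clustered {α : Type*} {σ : ℕ} (s : Fin σ → α) (k : Fin σ → ℕ) :
    (clustered s k).reverse = (List.finRange σ).flatMap (fun j => List.replicate (k j) (s j)) := by
  simp [clustered, List.reverse_flatMap, Function.comp_def]

/-- The coercion in `term` elaborates through the list monad, as `w >>= pure ∘ (↑)`. -/
lemma term_eq_map_append {α : Type*} (w : List α) : term w = w.map (↑) ++ [⊥] := by
  simp [term, List.map_eq_flatMap]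

theorem clustered_bwt_runs_general {α : Type*} [LinearOrder α] (σ : ℕ)
    (s : Fin σ → α) (hs : StrictMono s)
    (k : Fin σ → ℕ) (hk : ∀ j, 2 ≤ k j) :
    runsCount (bwtL (term (clustered s k))) = σ + 1 := by
  have hsorted : ((clustered s k).map ((↑) : α → WithBot α)).Pairwise (· ≥ ·) :=
    List.pairwise_map.mpr ((pairwise_ge_clustered hs.monotone k).imp WithBot.coe_le_coe.mpr)
  have hbot : ∀ a ∈ (clustered s k).map ((↑) : α → WithBot α), ⊥ < a := by
    simp [WithBot.bot_lt_coe]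
  rw [term_eq_map_append, bwtL_append_singleton hsorted hbot, ← List.map_reverse, reverse_clustered,
    List.map_flatMap]
  simp only [List.map_replicate]
  rw [runsCount_flatMap_replicate_append_singleton (fun j => (s j : WithBot α)) k ⊥
    (fun j _ => lt_of_lt_of_le two_pos (hk j))
    ((List.nodup_finRange σ).imp fun hij h => hij (hs.injective (WithBot.coe_injective h))).isChain
    (fun j _ => WithBot.coe_ne_bot), List.length_finRange]

/-- the BWT of the terminated clustered string has exactly
σ + 1 runs. -/
theorem clustered_bwt_runs {α : Type*} [LinearOrder α] (σ : ℕ) (hσ : 1 ≤ σ)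
    (s : Fin σ → α) (hs : StrictMono s)
    (k : Fin σ → ℕ) (hk : ∀ j, 2 ≤ k j) :
    runsCount (bwtL (term (clustered s k))) = σ + 1 :=
  clustered_bwt_runs_general σ s hs k hk
end

section
/- Let w_lin be the linearization of (a rotation of) a binary de Bruijn sequence of order k ≥ 2, and let s be the suffix of w_lin of length k − 1. Then the set of super-maximal extensions of w_lin $ equals the set of super-maximal extensions of w_lin together with the single additional string s$; in particular sre(w_lin $) = sre(w_lin) + 1. -/
/-- A de Bruijn sequence of order `k` over a finite alphabet `α`: a cyclic
word of length `(card α)^k` in which every word of length `k` occurs exactly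
once as a cyclic length-`k` window. -/
def IsDeBruijn {α : Type*} [Fintype α] (k : ℕ) (C : List α) : Prop :=
  C.length = Fintype.card α ^ k ∧
  ∀ x : List α, x.length = k → ∃! i, i < C.length ∧ x = (C.rotate i).take k

/-- The linearization of a rotation `U` of a de Bruijn cycle of order `k`:
append the first `k − 1` characters of `U` at the end. -/
def linz {α : Type*} (k : ℕ) (U : List α) : List α :=
  U ++ U.take (k - 1)

/-! Suppose every word of length `k` occurs exactly once in `v`. Then a word is right-maximal in
`v` iff it is shorter than `k`: shorter words occur followed by every letter, longer ones occur
only once. So a right-extension of `v$` not ending in `$` is the same as one of `v`, and since a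
nonempty `$`-free word is never a suffix of a word ending in `$`, super-maximality of these is
unchanged. The right-extensions ending in `$` are the `x$` with `x` a suffix of `v` followed
somewhere by a letter, i.e. with `|x| < k`, because a suffix of length `≥ k` occurs only at the
end of `v`. They are totally ordered by the suffix relation, so only the longest, `s$` with
`|s| = k - 1`, is super-maximal. -/

open List

variable {α : Type*}

/-- Coercing a list pointwise with `fun a => (a : WithBot α)` elaborates through the list monad
(as `List.map id (l >>= pure ∘ WithBot.some)`); this is the form found in `term`. -/
theorem map_coe_withBot_eq_map_some (l : List α) :
    (l.map fun a => (a : WithBot α)) = l.map WithBot.some := by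
  induction l <;> simp_all

theorem term_eq (v : List α) : term v = v.map WithBot.some ++ [⊥] := by
  rw [term, map_coe_withBot_eq_map_some]

theorem RightExt.infix {v y : List α} (h : RightExt v y) : y <:+: v := by
  obtain ⟨x, a, b, rfl, -, ha, -⟩ := h
  exact ha

theorem RightExt.ne_nil {v y : List α} (h : RightExt v y) : y ≠ [] := by
  obtain ⟨x, a, b, rfl, -⟩ := h
  simp

theorem finite_setOf_superMax (v : List α) : {y | SuperMax v y}.Finite :=
  v.sublists.finite_toSet.subset fun _ hy => mem_sublists.2 hy.1.infix.sublist

theorem infix_term_iff {v : List α} {y : List (WithBot α)} :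
    y <:+: term v ↔
      (∃ x, x <:+: v ∧ y = x.map (↑)) ∨ ∃ x, x <:+ v ∧ y = x.map (↑) ++ [⊥] := by
  rw [term_eq, infix_concat_iff, suffix_concat_iff, infix_map_iff]
  constructor
  · rintro ((rfl | ⟨t, rfl, ht⟩) | h)
    · exact Or.inl ⟨[], nil_infix, rfl⟩
    · obtain ⟨x, hx, rfl⟩ := suffix_map_iff.1 ht
      exact Or.inr ⟨x, hx, rfl⟩
    · exact Or.inl h
  · rintro (h | ⟨x, hx, rfl⟩)
    · exact Or.inr h
    · exact Or.inl (Or.inr ⟨_, rfl, hx.map _⟩)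

theorem map_coe_infix_term_iff {v y : List α} :
    y.map ((↑) : α → WithBot α) <:+: term v ↔ y <:+: v := by
  refine ⟨fun h => ?_, fun h => term_eq v ▸ (h.map _).trans (prefix_append _ _).isInfix⟩
  rcases infix_term_iff.1 h with ⟨x, hx, hyx⟩ | ⟨x, -, hyx⟩
  · rwa [map_injective_iff.2 WithBot.coe_injective hyx]
  · simpa using congrArg (⊥ ∈ ·) hyx

theorem concat_bot_infix_term_iff {v x : List α} :
    x.map ((↑) : α → WithBot α) ++ [⊥] <:+: term v ↔ x <:+ v := by
  refine ⟨fun h => ?_,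
    fun h => term_eq v ▸ (suffix_concat_iff.2 (Or.inr ⟨_, rfl, h.map _⟩)).isInfix⟩
  rcases infix_term_iff.1 h with ⟨x', -, hxx'⟩ | ⟨x', hx', hxx'⟩
  · simpa using congrArg (⊥ ∈ ·) hxx'
  · rwa [map_injective_iff.2 WithBot.coe_injective (append_cancel_right hxx')]

theorem rightExt_term_map_coe_iff {v y : List α} :
    RightExt (term v) (y.map (↑)) ↔
      RightExt v y ∨ ∃ x a, y = x ++ [a] ∧ y <:+: v ∧ x <:+ v := by
  constructor
  · rintro ⟨x', a', b, hy, hab, ha, hb⟩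
    obtain ⟨x, l, rfl, rfl, hl⟩ := map_eq_append_iff.1 hy
    obtain ⟨a, rfl, rfl⟩ := map_eq_singleton_iff.1 hl
    have hy : x ++ [a] <:+: v := map_coe_infix_term_iff.1 (by simpa using ha)
    induction b using WithBot.recBotCoe with
    | bot => exact Or.inr ⟨x, a, rfl, hy, concat_bot_infix_term_iff.1 hb⟩
    | coe b =>
      exact Or.inl ⟨x, a, b, rfl, fun h => hab (h ▸ rfl), hy,
        map_coe_infix_term_iff.1 (by simpa using hb)⟩
  · rintro (⟨x, a, b, rfl, hab, ha, hb⟩ | ⟨x, a, rfl, hy, hx⟩)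
    · exact ⟨x.map (↑), a, b, by simp, by simpa using hab,
        by simpa using map_coe_infix_term_iff.2 ha, by simpa using map_coe_infix_term_iff.2 hb⟩
    · exact ⟨x.map (↑), a, ⊥, by simp, WithBot.coe_ne_bot,
        by simpa using map_coe_infix_term_iff.2 hy, concat_bot_infix_term_iff.2 hx⟩

theorem rightExt_term_concat_bot_iff {v x : List α} :
    RightExt (term v) (x.map (↑) ++ [⊥]) ↔ x <:+ v ∧ ∃ a, x ++ [a] <:+: v := by
  constructor
  · rintro ⟨x', a', b, hx, hab, ha, hb⟩
    obtain ⟨rfl, h⟩ := append_inj' hx rfl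
    obtain rfl : a' = ⊥ := (cons.inj h).1.symm
    induction b using WithBot.recBotCoe with
    | bot => exact absurd rfl hab
    | coe b =>
      exact ⟨concat_bot_infix_term_iff.1 ha, b, map_coe_infix_term_iff.1 (by simpa using hb)⟩
  · rintro ⟨hx, a, ha⟩
    exact ⟨x.map (↑), ⊥, a, rfl, WithBot.bot_ne_coe, concat_bot_infix_term_iff.2 hx,
      by simpa using map_coe_infix_term_iff.2 ha⟩

theorem sre_term_eq_add_one {v : List α} {t : List (WithBot α)} (ht : ⊥ ∈ t)
    (h : {y | SuperMax (term v) y} =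
      (fun l : List α => l.map (↑)) '' {y | SuperMax v y} ∪ {t}) :
    sre (term v) = sre v + 1 := by
  have ht' : t ∉ (fun l : List α => l.map (↑)) '' {y | SuperMax v y} := by
    rintro ⟨x, -, rfl⟩
    simp at ht
  rw [sre, h, Set.union_singleton,
    Set.ncard_insert_of_notMem ht' ((finite_setOf_superMax v).image _),
    Set.ncard_image_of_injective _ (map_injective_iff.2 WithBot.coe_injective), sre]

structure IsLinearDeBruijn (k : ℕ) (v : List α) : Prop where
  infix_of_length_eq : ∀ x : List α, x.length = k → x <:+: v
  eq_of_append_eq : ∀ {x s₁ t₁ s₂ t₂ : List α}, x.length = k →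
    s₁ ++ x ++ t₁ = v → s₂ ++ x ++ t₂ = v → s₁ = s₂

namespace IsLinearDeBruijn

variable {k : ℕ} {v x y : List α}

theorem infix_of_length_le [Nonempty α] (hv : IsLinearDeBruijn k v) (hx : x.length ≤ k) :
    x <:+: v := by
  obtain ⟨a⟩ := ‹Nonempty α›
  refine (prefix_append x (replicate (k - x.length) a)).isInfix.trans (hv.infix_of_length_eq _ ?_)
  simp only [length_append, length_replicate]
  omega

theorem le_length [Nonempty α] (hv : IsLinearDeBruijn k v) : k ≤ v.length := by
  simpa using
    (hv.infix_of_length_le (x := replicate k (Classical.arbitrary α)) (by simp)).length_le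

theorem eq_of_append_eq_of_le_length (hv : IsLinearDeBruijn k v) (hx : k ≤ x.length)
    {s₁ t₁ s₂ t₂ : List α} (h₁ : s₁ ++ x ++ t₁ = v) (h₂ : s₂ ++ x ++ t₂ = v) :
    s₁ = s₂ ∧ t₁ = t₂ := by
  have split : ∀ {s t}, s ++ x ++ t = v → s ++ x.take k ++ (x.drop k ++ t) = v := fun h => by
    rw [← h, append_assoc, ← append_assoc (x.take k), take_append_drop, append_assoc]
  obtain rfl := hv.eq_of_append_eq (by simpa using hx) (split h₁) (split h₂)
  exact ⟨rfl, append_cancel_left (h₁.trans h₂.symm)⟩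

theorem eq_of_concat_infix (hv : IsLinearDeBruijn k v) (hx : k ≤ x.length) {a b : α}
    (ha : x ++ [a] <:+: v) (hb : x ++ [b] <:+: v) : a = b := by
  obtain ⟨s₁, t₁, h₁⟩ := ha
  obtain ⟨s₂, t₂, h₂⟩ := hb
  have := (hv.eq_of_append_eq_of_le_length hx (t₁ := a :: t₁) (t₂ := b :: t₂)
    (by simpa using h₁) (by simpa using h₂)).2
  exact (cons.inj this).1

theorem not_concat_infix_of_suffix (hv : IsLinearDeBruijn k v) (hx : k ≤ x.length)
    (hxv : x <:+ v) {a : α} : ¬ x ++ [a] <:+: v := by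
  rintro ⟨s₁, t₁, h₁⟩
  obtain ⟨s₀, h₀⟩ := hxv
  have := (hv.eq_of_append_eq_of_le_length hx (t₁ := []) (t₂ := a :: t₁)
    (by simpa using h₀) (by simpa using h₁)).2
  exact cons_ne_nil _ _ this.symm

theorem rightExt_iff [Nontrivial α] (hv : IsLinearDeBruijn k v) :
    RightExt v y ↔ y ≠ [] ∧ y.length ≤ k := by
  constructor
  · rintro ⟨x, a, b, rfl, hab, ha, hb⟩
    have : x.length < k := lt_of_not_ge fun h => hab (hv.eq_of_concat_infix h ha hb)
    simp only [ne_eq, append_eq_nil_iff, cons_ne_nil, and_false, not_false_eq_true,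
      length_append, length_singleton, true_and]
    omega
  · rintro ⟨hy, hyk⟩
    obtain ⟨x, a, rfl⟩ := (eq_nil_or_concat' y).resolve_left hy
    obtain ⟨b, hab⟩ := exists_ne a
    refine ⟨x, a, b, rfl, hab.symm, hv.infix_of_length_le hyk, hv.infix_of_length_le ?_⟩
    simpa using hyk

theorem rightExt_term_map_coe_iff [Nontrivial α] (hv : IsLinearDeBruijn k v) :
    RightExt (term v) (y.map (↑)) ↔ RightExt v y := by
  rw [_root_.rightExt_term_map_coe_iff, or_iff_left_of_imp]
  rintro ⟨x, a, rfl, hy, hx⟩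
  have : x.length < k := lt_of_not_ge fun h => hv.not_concat_infix_of_suffix h hx hy
  rw [hv.rightExt_iff]
  simp only [ne_eq, append_eq_nil_iff, cons_ne_nil, and_false, not_false_eq_true,
    length_append, length_singleton, true_and]
  omega

theorem rightExt_term_concat_bot_iff [Nonempty α] (hv : IsLinearDeBruijn k v) :
    RightExt (term v) (x.map (↑) ++ [⊥]) ↔ x <:+ v ∧ x.length < k := by
  rw [_root_.rightExt_term_concat_bot_iff]
  constructor
  · rintro ⟨hx, a, ha⟩
    exact ⟨hx, lt_of_not_ge fun h => hv.not_concat_infix_of_suffix h hx ha⟩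
  · rintro ⟨hx, hxk⟩
    obtain ⟨a⟩ := ‹Nonempty α›
    exact ⟨hx, a, hv.infix_of_length_le (by simpa using hxk)⟩

theorem superMax_term_map_coe_iff [Nontrivial α] (hv : IsLinearDeBruijn k v) :
    SuperMax (term v) (y.map (↑)) ↔ SuperMax v y := by
  have hsuf {x z : List α} : x.map WithBot.some <:+ z.map WithBot.some ↔ x <:+ z :=
    suffix_map_iff_of_injective WithBot.coe_injective
  simp only [SuperMax, hv.rightExt_term_map_coe_iff]
  refine and_congr_right fun hy => ⟨fun hmax z hz hyz => ?_, fun hmax z hz hyz => ?_⟩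
  · exact map_injective_iff.2 WithBot.coe_injective
      (hmax _ (hv.rightExt_term_map_coe_iff.2 hz) (hsuf.2 hyz))
  · rcases infix_term_iff.1 hz.infix with ⟨x, -, rfl⟩ | ⟨x, -, rfl⟩
    · rw [hmax x (hv.rightExt_term_map_coe_iff.1 hz) (hsuf.1 hyz)]
    · rcases suffix_concat_iff.1 hyz with hnil | ⟨t, hyt, -⟩
      · exact absurd (map_eq_nil_iff.1 hnil) hy.ne_nil
      · simpa using congrArg (⊥ ∈ ·) hyt

theorem superMax_term_concat_bot_iff [Nonempty α] (hv : IsLinearDeBruijn k v) (hk : 0 < k) :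
    SuperMax (term v) (x.map (↑) ++ [⊥]) ↔ x = v.drop (v.length - (k - 1)) := by
  have hkv := hv.le_length
  have hsuf {x' : List α} :
      x.map WithBot.some ++ [⊥] <:+ x'.map WithBot.some ++ [⊥] ↔ x <:+ x' := by
    simp [suffix_append_inj_of_length_eq, suffix_map_iff_of_injective WithBot.coe_injective]
  constructor
  · rintro ⟨hx, hmax⟩
    obtain ⟨hxv, hxk⟩ := hv.rightExt_term_concat_bot_iff.1 hx
    suffices x.length = k - 1 by rw [suffix_iff_eq_drop.1 hxv, this]
    by_contra hne
    set x' := v.drop (v.length - (x.length + 1))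
    have hx' : x' <:+ v := drop_suffix _ _
    have hlen : x'.length = x.length + 1 := by simp only [x', length_drop]; omega
    have := hmax (x'.map (↑) ++ [⊥]) (hv.rightExt_term_concat_bot_iff.2 ⟨hx', by omega⟩)
      (hsuf.2 (suffix_of_suffix_length_le hxv hx' (by omega)))
    simpa [hlen] using congrArg length this
  · rintro rfl
    refine ⟨hv.rightExt_term_concat_bot_iff.2 ⟨drop_suffix _ _, by simp; omega⟩,
      fun z hz hsz => ?_⟩
    rcases infix_term_iff.1 hz.infix with ⟨x', -, rfl⟩ | ⟨x', -, rfl⟩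
    · simpa using hsz.subset (mem_append_right _ (mem_singleton_self ⊥))
    · obtain ⟨hx', hx'k⟩ := hv.rightExt_term_concat_bot_iff.1 hz
      have := (hsuf.1 hsz).length_le
      simp only [length_drop] at this
      rw [suffix_iff_eq_drop.1 hx', show x'.length = k - 1 by omega]

theorem setOf_superMax_term [Nontrivial α] (hv : IsLinearDeBruijn k v) (hk : 0 < k) :
    {y | SuperMax (term v) y} = (fun l : List α => l.map (↑)) '' {y | SuperMax v y} ∪
      {(v.drop (v.length - (k - 1))).map (↑) ++ [⊥]} := by
  ext y
  simp only [Set.mem_ofPred_eq, Set.mem_union, Set.mem_image, Set.mem_singleton_iff]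
  constructor
  · intro hy
    rcases infix_term_iff.1 hy.1.infix with ⟨x, -, rfl⟩ | ⟨x, -, rfl⟩
    · exact Or.inl ⟨x, hv.superMax_term_map_coe_iff.1 hy, rfl⟩
    · rw [(hv.superMax_term_concat_bot_iff hk).1 hy]
      exact Or.inr rfl
  · rintro (⟨x, hx, rfl⟩ | rfl)
    · exact hv.superMax_term_map_coe_iff.2 hx
    · exact (hv.superMax_term_concat_bot_iff hk).2 rfl

end IsLinearDeBruijn

theorem IsDeBruijn.rotate [Fintype α] {k : ℕ} {C : List α} (hC : IsDeBruijn k C) (c : ℕ) :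
    IsDeBruijn k (C.rotate c) := by
  refine ⟨by rw [length_rotate, hC.1], fun x hx => ?_⟩
  obtain ⟨j, ⟨hj, rfl⟩, huniq⟩ := hC.2 x hx
  have hn : 0 < C.length := by omega
  obtain ⟨d, hd⟩ : ∃ d, (c + d) % C.length = 0 :=
    ⟨C.length - c % C.length, by
      rw [← Nat.mod_add_mod, Nat.add_sub_cancel' (Nat.mod_lt c hn).le, Nat.mod_self]⟩
  have hrot (i : ℕ) : (C.rotate c).rotate i = C.rotate ((c + i) % C.length) := by
    rw [rotate_rotate, rotate_mod]
  refine ⟨(j + d) % C.length, ⟨by simpa using Nat.mod_lt _ hn, ?_⟩,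
    fun i ⟨hi, hxi⟩ => ?_⟩
  · rw [hrot, Nat.add_mod_mod, Nat.add_left_comm, Nat.add_mod, hd, add_zero, Nat.mod_mod,
      Nat.mod_eq_of_lt hj]
  · rw [length_rotate] at hi
    have hji : (c + i) % C.length = j := huniq _ ⟨Nat.mod_lt _ hn, by rwa [← hrot]⟩
    rw [← hji, Nat.mod_add_mod, Nat.add_right_comm, Nat.add_mod, hd, zero_add, Nat.mod_mod,
      Nat.mod_eq_of_lt hi]

theorem take_drop_linz {k i : ℕ} {U : List α} (hi : i < U.length) (hk : k ≤ U.length) :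
    ((linz k U).drop i).take k = (U.rotate i).take k := by
  rw [linz, drop_append_of_le_length hi.le, rotate_eq_drop_append_take hi.le, take_append,
    take_append, take_take, take_take, length_drop]
  congr 2
  omega

theorem IsDeBruijn.isLinearDeBruijn_linz [Fintype α] {k : ℕ} {U : List α} (hU : IsDeBruijn k U)
    (hk : 0 < k) (hkU : k ≤ U.length) : IsLinearDeBruijn k (linz k U) := by
  have window {x s t : List α} (hx : x.length = k) (h : s ++ x ++ t = linz k U) :
      s.length < U.length ∧ x = (U.rotate s.length).take k := by
    have hlen := congrArg length h
    simp only [linz, length_append, length_take] at hlen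
    have hs : s.length < U.length := by omega
    refine ⟨hs, ?_⟩
    rw [← take_drop_linz hs hkU, ← h, append_assoc, drop_left, ← hx, take_left]
  constructor
  · intro x hx
    obtain ⟨i, ⟨hi, rfl⟩, -⟩ := hU.2 x hx
    rw [← take_drop_linz hi hkU]
    exact (take_prefix _ _).isInfix.trans (drop_suffix _ _).isInfix
  · intro x s₁ t₁ s₂ t₂ hx h₁ h₂
    obtain ⟨hs₁, hx₁⟩ := window hx h₁
    obtain ⟨hs₂, hx₂⟩ := window hx h₂
    have hlen : s₁.length = s₂.length := (hU.2 x hx).unique ⟨hs₁, hx₁⟩ ⟨hs₂, hx₂⟩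
    rw [← take_left (l₁ := s₁) (l₂ := x ++ t₁), ← append_assoc, h₁, hlen, ← h₂, append_assoc,
      take_left]

/-- for the linearization `w_lin` of (a rotation of) a binary
de Bruijn sequence of order k ≥ 2, with `s` the suffix of `w_lin` of length
k − 1, the super-maximal extensions of `w_lin $` are exactly the
super-maximal extensions of `w_lin` together with the single additional
string `s$`; in particular `sre(w_lin $) = sre(w_lin) + 1`. -/
theorem binary_deBruijn_supermax_term (k : ℕ) (hk : 2 ≤ k)
    (C : List (Fin 2)) (hC : IsDeBruijn k C) (c : ℕ)
    (wlin : List (Fin 2)) (hw : wlin = linz k (C.rotate c)) :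
    {y | SuperMax (term wlin) y} =
      (fun l : List (Fin 2) => l.map (fun a => (a : WithBot (Fin 2)))) ''
        {y | SuperMax wlin y} ∪
      {(wlin.drop (wlin.length - (k - 1))).map
          (fun a => (a : WithBot (Fin 2))) ++ [⊥]} ∧
    sre (term wlin) = sre wlin + 1 := by
  have hU := hC.rotate c
  have hkU : k ≤ (C.rotate c).length := by
    rw [hU.1, Fintype.card_fin]
    exact Nat.lt_two_pow_self.le
  have hv : IsLinearDeBruijn k wlin := hw ▸ hU.isLinearDeBruijn_linz (by omega) hkU
  have hset := hv.setOf_superMax_term (by omega)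
  simp only [map_coe_withBot_eq_map_some]
  exact ⟨hset, sre_term_eq_add_one (by simp) hset⟩
end
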